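/- If uniform convergence of per-group losses holds at level β, and a model h satisfies (ℓ, α)-convex lexicographic fairness with respect to the sample S, then h satisfies (ℓ, α + 2ℓβ)-convex lexicographic fairness with respect to the underlying distribution P. -/

import Mathlib

/-- `Mtop L j h` is the maximum, over all size-j subsets of the K groups,
of the sum of group losses of model h under loss family L. -/
noncomputable def Mtop {K : ℕ} {M : Type*} (L : Fin K → M → ℝ) (j : ℕ) (h : M) : ℝ :=
  sSup ((fun s : Finset (Fin K) => ∑ i ∈ s, L i h) ''
    ↑(Finset.powersetCard j (Finset.univ : Finset (Fin K))))

/-- (ℓ, α)-convex lexicographic fairness of model h w.r.t. group losses L: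
there is a slack sequence ε with ‖ε‖_∞ ≤ α such that, with the hierarchy
F₍₀₎ = all models and F₍ⱼ₎ = { h' ∈ F₍ⱼ₋₁₎ : Mtop j h' ≤ inf_{F₍ⱼ₋₁₎} Mtop j + ε_j(h') },
for every 1 ≤ j ≤ ℓ: Mtop j h ≤ inf_{F₍ⱼ₋₁₎} Mtop j + ε_j(h) + α. -/
def ConvexLexifair {K : ℕ} {M : Type*} (L : Fin K → M → ℝ) (ℓ : ℕ) (α : ℝ)
    (h : M) : Prop :=
  ∃ ε : ℕ → M → ℝ, (∀ j h', ε j h' ≤ α) ∧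
    ∃ F : ℕ → Set M, F 0 = Set.univ ∧
      (∀ j, F (j + 1) = {h' ∈ F j |
        Mtop L (j + 1) h' ≤ sInf (Mtop L (j + 1) '' F j) + ε (j + 1) h'}) ∧
      ∀ j, j < ℓ →
        Mtop L (j + 1) h ≤ sInf (Mtop L (j + 1) '' F j) + ε (j + 1) h + α

lemma Mtop_le_Mtop_add {K : ℕ} {M : Type*} (LS LP : Fin K → M → ℝ) (β : ℝ) (hβ : 0 ≤ β)
    (huc : ∀ (h : M) (k : Fin K), |LS k h - LP k h| ≤ β) (j : ℕ) (h : M) :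
    Mtop LS j h ≤ Mtop LP j h + j * β := by
  unfold Mtop
  rcases (Finset.powersetCard j (Finset.univ : Finset (Fin K))).eq_empty_or_nonempty with he | hne
  · simp [he, Real.sSup_empty]
    positivity
  · obtain ⟨s0, hs0⟩ := hne
    apply csSup_le ⟨_, Set.mem_image_of_mem _ hs0⟩
    rintro x ⟨s, hs, rfl⟩
    have hcard : s.card = j := (Finset.mem_powersetCard.mp hs).2
    have h1 : ∑ i ∈ s, LS i h ≤ ∑ i ∈ s, LP i h + j * β := by
      calc ∑ i ∈ s, LS i h ≤ ∑ i ∈ s, (LP i h + β) := by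
            apply Finset.sum_le_sum
            intro i _
            have := (abs_le.mp (huc h i)).2
            linarith
        _ = ∑ i ∈ s, LP i h + j * β := by
            rw [Finset.sum_add_distrib, Finset.sum_const, hcard, nsmul_eq_mul]
    have h2 : ∑ i ∈ s, LP i h ≤ sSup ((fun s : Finset (Fin K) => ∑ i ∈ s, LP i h) ''
        ↑(Finset.powersetCard j (Finset.univ : Finset (Fin K)))) := by
      apply le_csSup
      · exact (Set.Finite.image _ (Finset.finite_toSet _)).bddAbove
      · exact Set.mem_image_of_mem _ hs
    linarith

lemma sInf_image_le_add {M : Type*} (f g : M → ℝ) (A : Set M) (c : ℝ) (hc : 0 ≤ c)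
    (hfg : ∀ x, f x ≤ g x + c) (hgf : ∀ x, g x ≤ f x + c) :
    sInf (f '' A) ≤ sInf (g '' A) + c := by
  rcases A.eq_empty_or_nonempty with rfl | hA
  · simp [Real.sInf_empty]; exact hc
  by_cases hb : BddBelow (g '' A)
  · have hbf : BddBelow (f '' A) := by
      obtain ⟨b, hbl⟩ := hb
      refine ⟨b - c, ?_⟩
      rintro x ⟨y, hy, rfl⟩
      have := hbl (Set.mem_image_of_mem g hy)
      have := hgf y
      linarith
    have key : sInf (f '' A) - c ≤ sInf (g '' A) := by
      apply le_csInf (hA.image g)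
      rintro y ⟨x, hx, rfl⟩
      have h1 : sInf (f '' A) ≤ f x := csInf_le hbf (Set.mem_image_of_mem f hx)
      have := hfg x
      linarith
    linarith
  · have hbf : ¬ BddBelow (f '' A) := by
      intro ⟨b, hbl⟩
      apply hb
      refine ⟨b - c, ?_⟩
      rintro x ⟨y, hy, rfl⟩
      have := hbl (Set.mem_image_of_mem f hy)
      have := hfg y
      linarith
    rw [Real.sInf_of_not_bddBelow hb, Real.sInf_of_not_bddBelow hbf]
    linarith

/-- The filtration chain determined by a loss family and slack function. -/
noncomputable def Fchain {K : ℕ} {M : Type*} (L : Fin K → M → ℝ) (ε : ℕ → M → ℝ) : ℕ → Set M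
  | 0 => Set.univ
  | (j+1) => {h' ∈ Fchain L ε j |
      Mtop L (j + 1) h' ≤ sInf (Mtop L (j + 1) '' Fchain L ε j) + ε (j + 1) h'}

/-- Generalization for convex lexifairness: if per-group empirical losses LS and
distributional losses LP are uniformly within β, and h is (ℓ, α)-convex
lexicographically fair w.r.t. the sample losses LS, then h is
(ℓ, α + 2ℓβ)-convex lexicographically fair w.r.t. the distributional losses LP. -/
theorem stmt_11 {K : ℕ} {M : Type*} (LS LP : Fin K → M → ℝ)
    (β α : ℝ) (hβ : 0 ≤ β) (hα : 0 ≤ α)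
    (huc : ∀ (h : M) (k : Fin K), |LS k h - LP k h| ≤ β)
    (ℓ : ℕ) (h : M)
    (hfair : ConvexLexifair LS ℓ α h) :
    ConvexLexifair LP ℓ (α + 2 * ℓ * β) h := by
  classical
  obtain ⟨ε, hεle, F, hF0, hFrec, hfin⟩ := hfair
  have h2ℓβ : 0 ≤ 2 * (ℓ : ℝ) * β := by positivity
  -- trivial case ℓ = 0
  rcases Nat.eq_zero_or_pos ℓ with rfl | hℓ
  · refine ⟨fun _ _ => 0, fun j h' => by simpa using hα, Fchain LP (fun _ _ => 0), rfl,
      fun j => rfl, fun j hj => absurd hj (Nat.not_lt_zero j)⟩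
  -- case β = 0 : LS = LP
  rcases eq_or_lt_of_le hβ with hb0 | hbpos
  · have hβ0 : β = 0 := hb0.symm
    subst hβ0
    have hLSP : LS = LP := by
      funext k x
      have h12 := abs_le.mp (huc x k)
      have hz : LS k x - LP k x = 0 := by
        have ha := h12.1; have hbb := h12.2; linarith
      linarith
    subst hLSP
    refine ⟨ε, fun j h' => ?_, F, hF0, hFrec, fun j hj => ?_⟩
    · simp only [mul_zero, add_zero]; exact hεle j h'
    · simp only [mul_zero, add_zero]; exact hfin j hj
  -- main case : β > 0, 1 ≤ ℓ
  have hMtop1 : ∀ (j : ℕ) (h' : M), Mtop LS j h' ≤ Mtop LP j h' + j * β :=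
    Mtop_le_Mtop_add LS LP β hβ huc
  have hMtop2 : ∀ (j : ℕ) (h' : M), Mtop LP j h' ≤ Mtop LS j h' + j * β :=
    Mtop_le_Mtop_add LP LS β hβ (fun x k => by rw [abs_sub_comm]; exact huc x k)
  have hInf2 : ∀ (j : ℕ) (A : Set M),
      sInf (Mtop LS j '' A) ≤ sInf (Mtop LP j '' A) + j * β := fun j A =>
    sInf_image_le_add _ _ A (j * β) (by positivity) (hMtop1 j) (hMtop2 j)
  set εP : ℕ → M → ℝ := fun j' h' =>
    if j' = 0 ∨ ℓ < j' then 0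
    else if h' ∈ F j' then Mtop LP j' h' - sInf (Mtop LP j' '' F (j' - 1))
    else min α (Mtop LP j' h' - sInf (Mtop LP j' '' F (j' - 1)) - β) with hεPdef
  have hval_mem : ∀ (j : ℕ) (h' : M), j + 1 ≤ ℓ → h' ∈ F (j+1) →
      εP (j+1) h' = Mtop LP (j+1) h' - sInf (Mtop LP (j+1) '' F j) := by
    intro j h' hj hm
    simp only [hεPdef]
    rw [if_neg (by omega), if_pos hm, Nat.add_sub_cancel]
  have hval_nmem : ∀ (j : ℕ) (h' : M), j + 1 ≤ ℓ → h' ∉ F (j+1) →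
      εP (j+1) h' = min α (Mtop LP (j+1) h' - sInf (Mtop LP (j+1) '' F j) - β) := by
    intro j h' hj hm
    simp only [hεPdef]
    rw [if_neg (by omega), if_neg hm, Nat.add_sub_cancel]
  -- bound on εP
  have hεPle : ∀ (j' : ℕ) (h' : M), εP j' h' ≤ α + 2 * ℓ * β := by
    intro j' h'
    by_cases h0 : j' = 0 ∨ ℓ < j'
    · simp only [hεPdef]
      rw [if_pos h0]; linarith
    · push_neg at h0
      obtain ⟨j, rfl⟩ := Nat.exists_eq_succ_of_ne_zero h0.1
      have hj : j + 1 ≤ ℓ := h0.2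
      have hcast : ((j:ℝ) + 1) * β ≤ (ℓ : ℝ) * β := by
        apply mul_le_mul_of_nonneg_right _ hβ
        exact_mod_cast hj
      by_cases hm : h' ∈ F (j+1)
      · rw [hval_mem j h' hj hm]
        have hmem := (hFrec j) ▸ hm
        obtain ⟨hmF, hcond⟩ := hmem
        have h1 := hMtop2 (j+1) h'
        have h2 := hInf2 (j+1) (F j)
        have h3 := hεle (j+1) h'
        push_cast at h1 h2
        linarith
      · rw [hval_nmem j h' hj hm]
        have := min_le_left α (Mtop LP (j+1) h' - sInf (Mtop LP (j+1) '' F j) - β)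
        linarith
  -- the chain agrees with F up to level ℓ
  have hFPeq : ∀ j : ℕ, j ≤ ℓ → Fchain LP εP j = F j := by
    intro j
    induction j with
    | zero => intro _; rw [hF0]; rfl
    | succ j ih =>
      intro hj
      have hFj : Fchain LP εP j = F j := ih (Nat.le_of_succ_le hj)
      ext h'
      show (h' ∈ Fchain LP εP j ∧
        Mtop LP (j+1) h' ≤ sInf (Mtop LP (j+1) '' Fchain LP εP j) + εP (j+1) h') ↔ _
      rw [hFj]
      constructor
      · rintro ⟨hmF, hcond⟩
        by_contra hno
        rw [hval_nmem j h' hj hno] at hcond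
        have := min_le_right α (Mtop LP (j+1) h' - sInf (Mtop LP (j+1) '' F j) - β)
        linarith
      · intro hm
        have hmem := (hFrec j) ▸ hm
        refine ⟨hmem.1, ?_⟩
        rw [hval_mem j h' hj hm]
        linarith
  refine ⟨εP, hεPle, Fchain LP εP, rfl, fun j => rfl, ?_⟩
  intro j hj
  rw [hFPeq j (Nat.le_of_lt hj)]
  have hjℓ : j + 1 ≤ ℓ := hj
  have hcast : ((j:ℝ) + 1) * β ≤ (ℓ : ℝ) * β := by
    apply mul_le_mul_of_nonneg_right _ hβ
    exact_mod_cast hjℓ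
  have hone : (1 : ℝ) ≤ (ℓ : ℝ) := by exact_mod_cast hℓ
  by_cases hm : h ∈ F (j+1)
  · rw [hval_mem j h hjℓ hm]
    linarith
  · rw [hval_nmem j h hjℓ hm]
    have h1 := hMtop2 (j+1) h
    have h2 := hInf2 (j+1) (F j)
    have h3 := hεle (j+1) h
    have h4 := hfin j hj
    push_cast at h1 h2
    rcases le_total α (Mtop LP (j+1) h - sInf (Mtop LP (j+1) '' F j) - β) with hmin | hmin
    · rw [min_eq_left hmin]
      linarith
    · rw [min_eq_right hmin]
      nlinarith [mul_nonneg (sub_nonneg.mpr hone) hβ]
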